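/- Let 𝒞 be a polyhedral complex in ℝ^r, σ ∈ 𝒞, and z a point in the relative interior of σ. Then for every polyhedron τ ∈ 𝒞 with σ ≼ τ and every point y ∈ τ ∩ Ω_σ, the segment [y, z] is contained in τ ∩ Ω_σ; in particular τ ∩ Ω_σ is star shaped with centre z. -/
import Mathlib


open Set

noncomputable section

abbrev Vec (r : ℕ) : Type := Fin r → ℝ

/-- A (convex) polyhedron in `ℝ^r`: a finite intersection of closed half-spaces. -/
def IsPolyhedron {r : ℕ} (σ : Set (Vec r)) : Prop :=
  ∃ (n : ℕ) (f : Fin n → (Vec r →ₗ[ℝ] ℝ)) (c : Fin n → ℝ),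
    σ = {x | ∀ i, f i x ≤ c i}

/-- `τ` is a face of `σ`: either `σ` itself, or the subset of `σ` where a linear
functional bounded above on `σ` attains a given bound. -/
def IsFaceOf {r : ℕ} (τ σ : Set (Vec r)) : Prop :=
  τ = σ ∨ ∃ (g : Vec r →ₗ[ℝ] ℝ) (c : ℝ),
    (∀ x ∈ σ, g x ≤ c) ∧ τ = {x ∈ σ | g x = c}

/-- A polyhedral complex in `ℝ^r`: a finite set of convex polyhedra, closed under
taking faces, such that the intersection of any two members is a face of both. -/
structure PolyComplex (r : ℕ) where
  polys : Set (Set (Vec r))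
  finite : polys.Finite
  poly_mem : ∀ σ ∈ polys, IsPolyhedron σ
  face_mem : ∀ σ ∈ polys, ∀ τ, IsFaceOf τ σ → τ ∈ polys
  inter_face : ∀ σ ∈ polys, ∀ τ ∈ polys, IsFaceOf (σ ∩ τ) σ

/-- The support of a polyhedral complex. -/
def PolyComplex.support {r : ℕ} (C : PolyComplex r) : Set (Vec r) :=
  ⋃ σ ∈ C.polys, σ

/-- The relative interior of a polyhedron: the polyhedron minus all its proper faces. -/
def relint {r : ℕ} (σ : Set (Vec r)) : Set (Vec r) :=
  {x ∈ σ | ∀ τ, IsFaceOf τ σ → τ ≠ σ → x ∉ τ}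

/-- The polyhedral star of `σ` in `C`: the union of the relative interiors of all
members of `C` having `σ` as a face. -/
def polyStar {r : ℕ} (C : PolyComplex r) (σ : Set (Vec r)) : Set (Vec r) :=
  ⋃ τ ∈ {τ ∈ C.polys | IsFaceOf σ τ}, relint τ

/-- `Ω` is an open subset of the support of `C` (subspace topology). -/
def OpenInSupport {r : ℕ} (C : PolyComplex r) (Ω : Set (Vec r)) : Prop :=
  ∃ U : Set (Vec r), IsOpen U ∧ Ω = U ∩ C.support

/-- `S` is star shaped with centre `z`. -/
def StarShapedWith {r : ℕ} (z : Vec r) (S : Set (Vec r)) : Prop :=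
  ∀ x ∈ S, ∀ t ∈ Icc (0 : ℝ) 1, z + t • (x - z) ∈ S

/-- `Ω` is polyhedrally star shaped with centre `z`: there is a polyhedral complex `D`
such that `Ω` is an open subset of `|D|` and `σ ∩ Ω` is star shaped with centre `z`
for every maximal `σ ∈ D`. -/
def PolyStarShaped {r : ℕ} (z : Vec r) (Ω : Set (Vec r)) : Prop :=
  ∃ D : PolyComplex r, OpenInSupport D Ω ∧
    ∀ σ ∈ D.polys, (∀ τ ∈ D.polys, IsFaceOf σ τ → τ = σ) →
      StarShapedWith z (σ ∩ Ω)


lemma IsPolyhedron.convex {r : ℕ} {σ : Set (Vec r)} (h : IsPolyhedron σ) :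
    Convex ℝ σ := by
  obtain ⟨n, f, c, rfl⟩ := h
  have : {x : Vec r | ∀ i, f i x ≤ c i} = ⋂ i, {x | f i x ≤ c i} := by
    ext x; simp [Set.mem_iInter]
  rw [this]
  exact convex_iInter fun i => convex_halfSpace_le (f i).isLinear (c i)

lemma IsFaceOf.subset {r : ℕ} {σ τ : Set (Vec r)} (h : IsFaceOf σ τ) : σ ⊆ τ := by
  rcases h with rfl | ⟨g, c, hg, rfl⟩
  · exact subset_rfl
  · exact fun x hx => hx.1

/-- If `z ∈ relint σ` and `σ ≼ τ` in `𝒞`, then for every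
`y ∈ τ ∩ Ω_σ` the segment `[y,z]` is contained in `τ ∩ Ω_σ`; in particular
`τ ∩ Ω_σ` is star shaped with centre `z`. -/
theorem polyStar_piece_starShaped {r : ℕ} (C : PolyComplex r)
    (σ : Set (Vec r)) (hσ : σ ∈ C.polys) (z : Vec r) (hz : z ∈ relint σ)
    (τ : Set (Vec r)) (hτ : τ ∈ C.polys) (hface : IsFaceOf σ τ) :
    (∀ y ∈ τ ∩ polyStar C σ, segment ℝ y z ⊆ τ ∩ polyStar C σ) ∧
    StarShapedWith z (τ ∩ polyStar C σ) := by
  have hστ : σ ⊆ τ := hface.subset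
  have hzτ : z ∈ τ := hστ hz.1
  have hconvτ : Convex ℝ τ := (C.poly_mem τ hτ).convex
  have hzΩ : z ∈ polyStar C σ := by
    simp only [polyStar, Set.mem_iUnion, Set.mem_setOf_eq]
    exact ⟨σ, ⟨hσ, Or.inl rfl⟩, hz⟩
  have main : ∀ y ∈ τ ∩ polyStar C σ, segment ℝ y z ⊆ τ ∩ polyStar C σ := by
    rintro y ⟨hyτ, hyΩ⟩ w hw
    simp only [polyStar, Set.mem_iUnion, Set.mem_setOf_eq] at hyΩ
    obtain ⟨ρ, ⟨hρC, hρface⟩, hyρ⟩ := hyΩ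
    obtain ⟨a, b, ha, hb, hab, rfl⟩ := hw
    have hσρ : σ ⊆ ρ := hρface.subset
    have hzρ : z ∈ ρ := hσρ hz.1
    have hconvρ : Convex ℝ ρ := (C.poly_mem ρ hρC).convex
    refine ⟨hconvτ hyτ hzτ ha hb hab, ?_⟩
    rcases eq_or_lt_of_le ha with ha0 | ha0
    · have : a • y + b • z = z := by
        have hb1 : b = 1 := by linarith
        rw [← ha0, hb1]; simp
      rw [this]; exact hzΩ
    rcases eq_or_lt_of_le hb with hb0 | hb0
    · have : a • y + b • z = y := by
        have ha1 : a = 1 := by linarith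
        rw [← hb0, ha1]; simp
      rw [this]
      simp only [polyStar, Set.mem_iUnion, Set.mem_setOf_eq]
      exact ⟨ρ, ⟨hρC, hρface⟩, hyρ⟩
    · have hwρ : a • y + b • z ∈ ρ := hconvρ hyρ.1 hzρ ha hb hab
      have hwrel : a • y + b • z ∈ relint ρ := by
        refine ⟨hwρ, ?_⟩
        rintro F hF hFne hwF
        rcases hF with rfl | ⟨g, c, hg, rfl⟩
        · exact hFne rfl
        · have hgw : g (a • y + b • z) = c := hwF.2
          have hgy : g y ≤ c := hg y hyρ.1
          have hgz : g z ≤ c := hg z hzρ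
          have hexp : a * g y + b * g z = c := by
            rw [← hgw]; simp [map_add, map_smul, smul_eq_mul]
          have hgy' : g y = c := by
            by_contra hne
            have hlt : g y < c := lt_of_le_of_ne hgy hne
            have hc : a * c + b * c = c := by rw [← add_mul, hab, one_mul]
            nlinarith [mul_lt_mul_of_pos_left hlt ha0, mul_le_mul_of_nonneg_left hgz hb]
          exact hyρ.2 _ (Or.inr ⟨g, c, hg, rfl⟩) hFne ⟨hyρ.1, hgy'⟩
      simp only [polyStar, Set.mem_iUnion, Set.mem_setOf_eq]
      exact ⟨ρ, ⟨hρC, hρface⟩, hwrel⟩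
  refine ⟨main, ?_⟩
  intro x hx t ht
  apply main x hx
  refine ⟨t, 1 - t, ht.1, by linarith [ht.2], by ring, ?_⟩
  have : z + t • (x - z) = t • x + (1 - t) • z := by
    simp [smul_sub, sub_smul]; abel
  rw [this]
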